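/- arXiv:2103.14116 — 8 statements merged into one kernel-verified Lean document; each statement's English description precedes it below -/
import Mathlib

section
/- Suppose φ: G → H and ψ: H → G are group homomorphisms with ψ ∘ φ = id_G. Then for every g in the subgroup of G generated by torsion elements, stl_H(φ(g)) = stl_G(g). -/
/-!
Homomorphisms send torsion elements to torsion elements, so neither `φ` nor `ψ` increases
torsion length. Since `ψ ∘ φ = id`, `φ` preserves the torsion length of every power `g ^ n`,
hence also the stable torsion length.
-/

/-- Word length of `g` with respect to a generating set `S`:
the least `k` such that `g` is a product of `k` elements of `S`. -/
noncomputable def wl {G : Type*} [Group G] (S : Set G) (g : G) : ℕ :=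
  sInf {k | ∃ l : List G, (∀ x ∈ l, x ∈ S) ∧ l.length = k ∧ l.prod = g}

/-- Stable word length of `g` with respect to `S`, defined as the infimum of
`|g^n|_S / n` (which equals the limit by Fekete's lemma). -/
noncomputable def swl {G : Type*} [Group G] (S : Set G) (g : G) : ℝ :=
  ⨅ n : ℕ+, (wl S (g ^ (n : ℕ)) : ℝ) / (n : ℕ)

section WordLength

variable {G H : Type*} [Group G] [Group H] {S : Set G} {T : Set H}

theorem MonoidHom.exists_list_prod_map (f : G →* H) (hf : Set.MapsTo f S T) {g : G} {k : ℕ}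
    (h : ∃ l : List G, (∀ x ∈ l, x ∈ S) ∧ l.length = k ∧ l.prod = g) :
    ∃ l : List H, (∀ y ∈ l, y ∈ T) ∧ l.length = k ∧ l.prod = f g := by
  obtain ⟨l, hlS, rfl, rfl⟩ := h
  refine ⟨l.map f, ?_, l.length_map f, (map_list_prod f l).symm⟩
  simp only [List.mem_map, forall_exists_index, and_imp, forall_apply_eq_imp_iff₂]
  exact fun x hx => hf (hlS x hx)

theorem wl_map_of_leftInverse (φ : G →* H) (ψ : H →* G) (hψφ : Function.LeftInverse ψ φ)
    (hφ : Set.MapsTo φ S T) (hψ : Set.MapsTo ψ T S) (g : G) :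
    wl T (φ g) = wl S g := by
  unfold wl
  congr 1
  ext k
  refine ⟨fun h => ?_, φ.exists_list_prod_map hφ⟩
  exact hψφ g ▸ ψ.exists_list_prod_map hψ h

theorem swl_map_of_leftInverse (φ : G →* H) (ψ : H →* G) (hψφ : Function.LeftInverse ψ φ)
    (hφ : Set.MapsTo φ S T) (hψ : Set.MapsTo ψ T S) (g : G) :
    swl T (φ g) = swl S g := by
  simp only [swl, ← map_pow, wl_map_of_leftInverse φ ψ hψφ hφ hψ]

end WordLength

theorem stmt_3_general {G H : Type*} [Group G] [Group H] (φ : G →* H) (ψ : H →* G)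
    (hretr : ψ.comp φ = MonoidHom.id G)
    (g : G) :
    swl {x : H | IsOfFinOrder x} (φ g) = swl {x : G | IsOfFinOrder x} g :=
  swl_map_of_leftInverse φ ψ (DFunLike.congr_fun hretr) (fun _ => φ.isOfFinOrder)
    (fun _ => ψ.isOfFinOrder) g

theorem stmt_3 {G H : Type*} [Group G] [Group H] (φ : G →* H) (ψ : H →* G)
    (hretr : ψ.comp φ = MonoidHom.id G)
    (g : G) (hg : g ∈ Subgroup.closure {x : G | IsOfFinOrder x}) :
    swl {x : H | IsOfFinOrder x} (φ g) = swl {x : G | IsOfFinOrder x} g :=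
  stmt_3_general φ ψ hretr g
end

section
/- For any group G and any element g in the subgroup generated by torsion elements, there exists a countable subgroup H ≤ G containing g such that stl_H(g) = stl_G(g). -/
instance FreeGroup.countable {α : Type*} [Countable α] : Countable (FreeGroup α) := by
  classical
  exact FreeGroup.toWord_injective.countable

theorem Set.Countable.subgroup_closure {G : Type*} [Group G] {s : Set G}
    (hs : s.Countable) : Countable (Subgroup.closure s) := by
  have : Countable s := hs.to_subtype
  have hrange : ((Subgroup.closure s : Subgroup G) : Set G).Countable := by
    rw [← Subtype.range_val (s := s), ← FreeGroup.range_lift_eq_closure, MonoidHom.coe_range]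
    exact Set.countable_range _
  exact hrange.to_subtype

theorem Subgroup.closure_toSubmonoid_of_inv_subset {G : Type*} [Group G] {S : Set G}
    (hS : S⁻¹ ⊆ S) : (Subgroup.closure S).toSubmonoid = Submonoid.closure S := by
  rw [Subgroup.closure_toSubmonoid, Set.union_eq_self_of_subset_right hS]

section WordLength

variable {G : Type*} [Group G]

theorem wl_le_length {S : Set G} {l : List G} (hl : ∀ x ∈ l, x ∈ S) :
    wl S l.prod ≤ l.length :=
  Nat.sInf_le ⟨l, hl, rfl, rfl⟩

theorem exists_list_length_eq_wl {S : Set G} {g : G} (hg : g ∈ Submonoid.closure S) :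
    ∃ l : List G, (∀ x ∈ l, x ∈ S) ∧ l.length = wl S g ∧ l.prod = g := by
  obtain ⟨l, hlS, rfl⟩ := Submonoid.exists_list_of_mem_closure hg
  have hne :
      {k | ∃ l' : List G, (∀ x ∈ l', x ∈ S) ∧ l'.length = k ∧ l'.prod = l.prod}.Nonempty :=
    ⟨_, l, hlS, rfl, rfl⟩
  exact Nat.sInf_mem hne

theorem wl_map_le {H : Type*} [Group H] (f : H →* G) {S : Set H} {T : Set G}
    (hST : Set.MapsTo f S T) {h : H} (hh : h ∈ Submonoid.closure S) :
    wl T (f h) ≤ wl S h := by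
  obtain ⟨l, hlS, hlen, rfl⟩ := exists_list_length_eq_wl hh
  calc wl T (f l.prod) = wl T (l.map f).prod := by rw [map_list_prod]
    _ ≤ (l.map f).length := wl_le_length (by simpa using fun x hx => hST (hlS x hx))
    _ = wl S l.prod := by rw [List.length_map, hlen]

theorem wl_subtype_eq {H : Subgroup G} {S : Set G} {x : H} {l : List G}
    (hlS : ∀ y ∈ l, y ∈ S) (hlH : ∀ y ∈ l, y ∈ H) (hlen : l.length = wl S x)
    (hprod : l.prod = x) : wl (Subtype.val ⁻¹' S) x = wl S x := by
  lift l to List H using hlH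
  have hprod' : l.prod = x := Subtype.ext (by rwa [SubmonoidClass.coe_list_prod])
  have hl : ∀ y ∈ l, y ∈ Subtype.val ⁻¹' S := by simpa using hlS
  apply le_antisymm
  · calc wl _ x = wl _ l.prod := by rw [hprod']
      _ ≤ l.length := wl_le_length hl
      _ = wl S x := by simpa using hlen
  · refine wl_map_le H.subtype (fun y hy => hy) ?_
    rw [← hprod']
    exact Submonoid.list_prod_mem _ fun y hy => Submonoid.subset_closure (hl y hy)

end WordLength

theorem stmt_5 {G : Type*} [Group G]
    (g : G) (hg : g ∈ Subgroup.closure {x : G | IsOfFinOrder x}) :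
    ∃ (H : Subgroup G) (hgH : g ∈ H), Countable H ∧
      swl {x : H | IsOfFinOrder x} (⟨g, hgH⟩ : H) =
        swl {x : G | IsOfFinOrder x} g := by
  set S : Set G := {x | IsOfFinOrder x}
  have hS_inv : S⁻¹ ⊆ S := fun _ hx => isOfFinOrder_inv_iff.mp hx
  have hpow (n : ℕ) : g ^ n ∈ Submonoid.closure S := by
    rw [← Subgroup.closure_toSubmonoid_of_inv_subset hS_inv]
    exact pow_mem hg n
  choose L hLS hLlen hLprod using fun n => exists_list_length_eq_wl (hpow n)
  set H := Subgroup.closure (⋃ n, {x | x ∈ L n})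
  have hLH (n : ℕ) : ∀ x ∈ L n, x ∈ H := fun x hx =>
    Subgroup.subset_closure (Set.mem_iUnion.2 ⟨n, hx⟩)
  have hgH : g ∈ H := by simpa [hLprod 1] using H.list_prod_mem (hLH 1)
  have hSH : {x : H | IsOfFinOrder x} = Subtype.val ⁻¹' S :=
    Set.ext fun _ => Submonoid.isOfFinOrder_coe.symm
  refine ⟨H, hgH,
    (Set.countable_iUnion fun n => (L n).finite_toSet.countable).subgroup_closure, ?_⟩
  have hwl (n : ℕ) : wl (Subtype.val ⁻¹' S) (⟨g, hgH⟩ ^ n : H) = wl S (g ^ n) :=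
    wl_subtype_eq (hLS n) (hLH n) (hLlen n) (hLprod n)
  simp only [swl, hSH, hwl]
end

section
/- Let φ: G → ℝ be a homogeneous quasimorphism with defect D(φ) > 0. Then for any g in the subgroup generated by torsion elements, |φ(g)|/D(φ) ≤ stl_G(g), where stl_G(g) = lim_n tl_G(g^n)/n is the stable torsion length. -/
section

variable {G : Type*} [Group G]

theorem apply_eq_zero_of_isOfFinOrder {φ : G → ℝ} (hhom : ∀ (g : G) (n : ℕ), φ (g ^ n) = n * φ g)
    {x : G} (hx : IsOfFinOrder x) : φ x = 0 := by
  have h1 : φ 1 = 0 := by simpa using hhom 1 0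
  have h := hhom x (orderOf x)
  rw [pow_orderOf_eq_one, h1, eq_comm, mul_eq_zero] at h
  exact h.resolve_left (Nat.cast_ne_zero.mpr hx.orderOf_pos.ne')

theorem abs_apply_list_prod_le {φ : G → ℝ} {D : ℝ} (hD : ∀ a b, |φ (a * b) - φ a - φ b| ≤ D)
    (h1 : φ 1 = 0) (l : List G) :
    |φ l.prod| ≤ (l.map fun x => |φ x|).sum + l.length * D := by
  induction l with
  | nil => simp [h1]
  | cons x l ih =>
    have hx := hD x l.prod
    simp only [List.prod_cons, List.map_cons, List.sum_cons, List.length_cons, Nat.cast_succ]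
    calc |φ (x * l.prod)|
        ≤ |φ x| + |φ l.prod| + |φ (x * l.prod) - φ x - φ l.prod| := by
          have := abs_add_three (φ x) (φ l.prod) (φ (x * l.prod) - φ x - φ l.prod)
          rwa [show φ x + φ l.prod + (φ (x * l.prod) - φ x - φ l.prod) = φ (x * l.prod) by ring]
            at this
      _ ≤ _ := by linarith

theorem abs_apply_le_wl_mul {φ : G → ℝ} {D : ℝ} (hD : ∀ a b, |φ (a * b) - φ a - φ b| ≤ D)
    (h1 : φ 1 = 0) {S : Set G} (hS : ∀ x ∈ S, φ x = 0) {g : G}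
    (hg : g ∈ Submonoid.closure S) : |φ g| ≤ wl S g * D := by
  obtain ⟨l, hlS, hlen, rfl⟩ := exists_list_length_eq_wl hg
  have hsum : (l.map fun x => |φ x|).sum = 0 :=
    List.sum_eq_zero fun y hy => by
      obtain ⟨x, hx, rfl⟩ := List.mem_map.mp hy
      simp [hS x (hlS x hx)]
  simpa [hsum, hlen] using abs_apply_list_prod_le hD h1 l

end

theorem stmt_7 {G : Type*} [Group G] (φ : G → ℝ)
    (hhom : ∀ (g : G) (n : ℤ), φ (g ^ n) = n * φ g)
    (hbdd : BddAbove (Set.range fun p : G × G => |φ (p.1 * p.2) - φ p.1 - φ p.2|))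
    (hD : 0 < ⨆ p : G × G, |φ (p.1 * p.2) - φ p.1 - φ p.2|)
    (g : G) (hg : g ∈ Subgroup.closure {x : G | IsOfFinOrder x}) :
    |φ g| / (⨆ p : G × G, |φ (p.1 * p.2) - φ p.1 - φ p.2|) ≤
      swl {x : G | IsOfFinOrder x} g := by
  set D := ⨆ p : G × G, |φ (p.1 * p.2) - φ p.1 - φ p.2|
  have hhom' : ∀ (g : G) (n : ℕ), φ (g ^ n) = n * φ g := fun g n => by
    exact_mod_cast hhom g n
  have hdef : ∀ a b : G, |φ (a * b) - φ a - φ b| ≤ D := fun a b => le_ciSup hbdd (a, b)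
  refine le_ciInf fun n => ?_
  have hgn : g ^ (n : ℕ) ∈ Submonoid.closure {x : G | IsOfFinOrder x} := by
    rw [← Subgroup.closure_toSubmonoid_of_isOfFinOrder (s := {x : G | IsOfFinOrder x}) fun _ => id]
    exact pow_mem hg n
  have hbound := abs_apply_le_wl_mul hdef (by simpa using hhom' 1 0)
    (S := {x : G | IsOfFinOrder x}) (fun _ hx => apply_eq_zero_of_isOfFinOrder hhom' hx) hgn
  rw [hhom', abs_mul, Nat.abs_cast] at hbound
  rw [div_le_div_iff₀ hD (by exact_mod_cast n.pos)]
  linarith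
end

section
/- Let γ_1, …, γ_m be torsion elements of E(n) with rotational parts A_1, …, A_m ∈ O(n), and let h ∈ ℝ^n. Then the translation by (A_1 ⋯ A_m − I)h can be written as a product of 4m − 2 torsion elements of the group generated by the γ_i's and the translation T_h. -/
/-!
If `γ` is a torsion isometry with rotational part `A` and `T` is translation by `h`, the
commutator `γ T γ⁻¹ T⁻¹` is translation by `(A - I) h` and is the product of the two torsion
elements `γ` and `T γ⁻¹ T⁻¹`. Conjugating by `γ` multiplies translation vectors by `A`, so from
`A₁ ⋯ A_m - I = A₁ (A₂ ⋯ A_m - I) + (A₁ - I)` induction on `m` writes translation by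
`(A₁ ⋯ A_m - I) h` as a product of `2m ≤ 4m - 2` torsion elements, padded with identities.
-/

section TorsionProduct

variable {G : Type*} [Group G]

def IsTorsionProduct (S : Subgroup G) (k : ℕ) (g : G) : Prop :=
  ∃ l : List G, l.length = k ∧ (∀ t ∈ l, IsOfFinOrder t ∧ t ∈ S) ∧ l.prod = g

namespace IsTorsionProduct

variable {S : Subgroup G} {j k : ℕ} {a b : G}

theorem one (S : Subgroup G) : IsTorsionProduct S 0 1 :=
  ⟨[], rfl, by simp, rfl⟩

theorem mul (ha : IsTorsionProduct S j a) (hb : IsTorsionProduct S k b) :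
    IsTorsionProduct S (j + k) (a * b) := by
  obtain ⟨la, rfl, hla, rfl⟩ := ha
  obtain ⟨lb, rfl, hlb, rfl⟩ := hb
  refine ⟨la ++ lb, List.length_append, fun t ht => ?_, List.prod_append⟩
  rcases List.mem_append.1 ht with ht | ht
  exacts [hla t ht, hlb t ht]

theorem conj (ha : IsTorsionProduct S k a) {c : G} (hc : c ∈ S) :
    IsTorsionProduct S k (c * a * c⁻¹) := by
  obtain ⟨l, rfl, hl, rfl⟩ := ha
  refine ⟨l.map (MulAut.conj c), List.length_map _, ?_, (map_list_prod (MulAut.conj c) l).symm⟩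
  simp only [List.mem_map, forall_exists_index, and_imp, forall_apply_eq_imp_iff₂,
    MulAut.conj_apply]
  intro t ht
  exact ⟨(isConj_iff.2 ⟨c, rfl⟩).isOfFinOrder (hl t ht).1,
    S.mul_mem (S.mul_mem hc (hl t ht).2) (S.inv_mem hc)⟩

theorem mono (ha : IsTorsionProduct S j a) (hjk : j ≤ k) : IsTorsionProduct S k a := by
  have hpad : IsTorsionProduct S (k - j) 1 :=
    ⟨List.replicate (k - j) 1, List.length_replicate, by simp [S.one_mem],
      by simp [List.prod_replicate]⟩
  simpa [Nat.sub_add_cancel hjk] using hpad.mul ha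

end IsTorsionProduct

theorem isTorsionProduct_commutator {S : Subgroup G} {g t : G} (hg : IsOfFinOrder g)
    (hgS : g ∈ S) (htS : t ∈ S) : IsTorsionProduct S 2 (g * t * g⁻¹ * t⁻¹) := by
  refine ⟨[g, t * g⁻¹ * t⁻¹], rfl, ?_, by simp [mul_assoc]⟩
  simp only [List.mem_cons, List.not_mem_nil, or_false, forall_eq_or_imp, forall_eq]
  exact ⟨⟨hg, hgS⟩, (isConj_iff.2 ⟨t, rfl⟩).isOfFinOrder hg.inv,
    S.mul_mem (S.mul_mem htS (S.inv_mem hgS)) (S.inv_mem htS)⟩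

end TorsionProduct

namespace IsometryEquiv

variable {E : Type*} [SeminormedAddCommGroup E]

theorem addRight_zero : addRight (0 : E) = 1 := by
  ext x
  simp

theorem addRight_mul_addRight (a b : E) : addRight a * addRight b = addRight (a + b) := by
  ext x
  simp [add_assoc, add_comm a]

variable {F : Type*} [FunLike F E E] [AddHomClass F E E] {γ : E ≃ᵢ E} {A : F} {v : E}

theorem mul_addRight_mul_inv (hγ : ∀ x, γ x = A x + v) (w : E) :
    γ * addRight w * γ⁻¹ = addRight (A w) := by
  rw [mul_inv_eq_iff_eq_mul]
  ext y
  simp only [mul_apply, addRight_apply, hγ, map_add]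
  abel

theorem commutator_addRight (hγ : ∀ x, γ x = A x + v) (h : E) :
    γ * addRight h * γ⁻¹ * (addRight h)⁻¹ = addRight (A h - h) := by
  rw [mul_addRight_mul_inv hγ, mul_inv_eq_iff_eq_mul, addRight_mul_addRight, sub_add_cancel]

end IsometryEquiv

open IsometryEquiv in
theorem isTorsionProduct_addRight_prod_sub {E R : Type*} [SeminormedAddCommGroup E]
    [Semiring R] [Module R E] (S : Subgroup (E ≃ᵢ E)) (h : E) (hS : addRight h ∈ S) :
    ∀ {m : ℕ} (γ : Fin m → E ≃ᵢ E) (A : Fin m → E ≃ₗᵢ[R] E), (∀ i, IsOfFinOrder (γ i)) →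
      (∀ i, γ i ∈ S) → (∀ i, ∃ v, ∀ x, γ i x = A i x + v) →
      IsTorsionProduct S (2 * m) (addRight ((List.ofFn A).prod h - h))
  | 0, _, _, _, _, _ => by simpa [addRight_zero] using IsTorsionProduct.one S
  | m + 1, γ, A, htor, hγS, hrot => by
    obtain ⟨v, hv⟩ := hrot 0
    have htail := isTorsionProduct_addRight_prod_sub S h hS (fun i => γ i.succ)
      (fun i => A i.succ) (fun i => htor i.succ) (fun i => hγS i.succ) (fun i => hrot i.succ)
    have hsplit : addRight ((List.ofFn A).prod h - h)
        = γ 0 * addRight ((List.ofFn fun i => A i.succ).prod h - h) * (γ 0)⁻¹ *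
          (γ 0 * addRight h * (γ 0)⁻¹ * (addRight h)⁻¹) := by
      rw [mul_addRight_mul_inv hv, commutator_addRight hv, addRight_mul_addRight,
        List.ofFn_succ, List.prod_cons, LinearIsometryEquiv.coe_mul, Function.comp_apply,
        map_sub]
      congr 1
      abel
    rw [hsplit, Nat.mul_succ]
    exact (htail.conj (hγS 0)).mul (isTorsionProduct_commutator (htor 0) (hγS 0) hS)

theorem stmt_10_general {n : ℕ} (m : ℕ)
    (γ : Fin m → (EuclideanSpace ℝ (Fin n) ≃ᵢ EuclideanSpace ℝ (Fin n)))
    (A : Fin m → (EuclideanSpace ℝ (Fin n) ≃ₗᵢ[ℝ] EuclideanSpace ℝ (Fin n)))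
    (htor : ∀ i, IsOfFinOrder (γ i))
    (hrot : ∀ i, ∃ v, ∀ x, γ i x = A i x + v)
    (h : EuclideanSpace ℝ (Fin n))
    (T : EuclideanSpace ℝ (Fin n) ≃ᵢ EuclideanSpace ℝ (Fin n))
    (hT : ∀ x, T x = x + h) :
    ∃ l : List (EuclideanSpace ℝ (Fin n) ≃ᵢ EuclideanSpace ℝ (Fin n)),
      l.length = 4 * m - 2 ∧
      (∀ t ∈ l, IsOfFinOrder t ∧ t ∈ Subgroup.closure (Set.range γ ∪ {T})) ∧
      ∀ x, l.prod x = x + ((List.ofFn A).prod h - h) := by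
  have hTeq : T = IsometryEquiv.addRight h := IsometryEquiv.ext hT
  have hTS : T ∈ Subgroup.closure (Set.range γ ∪ {T}) := Subgroup.subset_closure (Or.inr rfl)
  have hγS : ∀ i, γ i ∈ Subgroup.closure (Set.range γ ∪ {T}) :=
    fun i => Subgroup.subset_closure (Or.inl ⟨i, rfl⟩)
  obtain ⟨l, hlen, hl, hprod⟩ :=
    (isTorsionProduct_addRight_prod_sub _ h (hTeq ▸ hTS) γ A htor hγS hrot).mono
      (show 2 * m ≤ 4 * m - 2 by omega)
  exact ⟨l, hlen, hl, fun x => by rw [hprod, IsometryEquiv.addRight_apply]⟩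

/-- If `γ₁, …, γ_m` are torsion isometries of `ℝⁿ` with rotational parts
`A₁, …, A_m` and `T` is translation by `h`, then translation by
`(A₁⋯A_m − I) h` is a product of `4m − 2` torsion elements of the group
generated by the `γᵢ` and `T`. -/
theorem stmt_10 {n : ℕ} (m : ℕ) (hm : 1 ≤ m)
    (γ : Fin m → (EuclideanSpace ℝ (Fin n) ≃ᵢ EuclideanSpace ℝ (Fin n)))
    (A : Fin m → (EuclideanSpace ℝ (Fin n) ≃ₗᵢ[ℝ] EuclideanSpace ℝ (Fin n)))
    (htor : ∀ i, IsOfFinOrder (γ i))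
    (hrot : ∀ i, ∃ v, ∀ x, γ i x = A i x + v)
    (h : EuclideanSpace ℝ (Fin n))
    (T : EuclideanSpace ℝ (Fin n) ≃ᵢ EuclideanSpace ℝ (Fin n))
    (hT : ∀ x, T x = x + h) :
    ∃ l : List (EuclideanSpace ℝ (Fin n) ≃ᵢ EuclideanSpace ℝ (Fin n)),
      l.length = 4 * m - 2 ∧
      (∀ t ∈ l, IsOfFinOrder t ∧ t ∈ Subgroup.closure (Set.range γ ∪ {T})) ∧
      ∀ x, l.prod x = x + ((List.ofFn A).prod h - h) :=
  stmt_10_general m γ A htor hrot h T hT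
end

section
/- Let Γ be a subgroup of E(n) generated by torsion elements, and let X ⊆ ℝ^n be the linear span of the images of A − I over all rotational parts A of elements of Γ. Then every element γ ∈ Γ has translational part lying in X; in particular every translation in Γ is a translation by a vector in X. -/
/-!
The set of isometries `γ` with `γ x - x ∈ X` for every `x` is a subgroup. A torsion element `t`
fixes the barycentre `p` of its orbit through `0`, so `t x - x = (A x - x) - (A p - p)` with `A`
the rotational part of `t`; hence every torsion element of `Γ`, and therefore all of `Γ`, lies in
that subgroup.
-/

namespace IsometryEquiv

section Displacement

variable {V : Type*} [PseudoEMetricSpace V] [AddGroup V]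

def displacementSubgroup (X : AddSubgroup V) : Subgroup (V ≃ᵢ V) where
  carrier := {γ | ∀ x, γ x - x ∈ X}
  one_mem' x := by simp
  mul_mem' {a b} ha hb x := by
    rw [mul_apply, ← sub_add_sub_cancel _ (b x)]
    exact X.add_mem (ha _) (hb x)
  inv_mem' {a} ha x := by
    simpa using X.neg_mem (ha (a⁻¹ x))

theorem mem_displacementSubgroup {X : AddSubgroup V} {γ : V ≃ᵢ V} :
    γ ∈ displacementSubgroup X ↔ ∀ x, γ x - x ∈ X :=
  Iff.rfl

end Displacement

section Torsion

variable {𝕜 V : Type*} [DivisionRing 𝕜] [CharZero 𝕜] [AddCommGroup V] [Module 𝕜 V]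
  [PseudoEMetricSpace V]

/-- The barycentre `(1/k) ∑_{i<k} tⁱ 0` of the orbit of `0` is fixed. -/
theorem exists_apply_eq_of_isOfFinOrder {t : V ≃ᵢ V} (ht : IsOfFinOrder t) {A : V →ₗ[𝕜] V}
    (hA : ∀ x, t x = A x + t 0) : ∃ p, t p = p := by
  set k := orderOf t
  have hk : (k : 𝕜) ≠ 0 := Nat.cast_ne_zero.2 ht.orderOf_pos.ne'
  set S := ∑ i ∈ Finset.range k, (t ^ i) 0
  have hAorbit : ∀ i : ℕ, A ((t ^ i) 0) = (t ^ (i + 1)) 0 - t 0 := fun i => by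
    rw [pow_succ', mul_apply, hA, add_sub_cancel_right]
  have hshift : ∑ i ∈ Finset.range k, (t ^ (i + 1)) 0 = S := by
    have h := Finset.sum_range_succ' (fun i => (t ^ i) 0) k
    rwa [Finset.sum_range_succ, pow_orderOf_eq_one, pow_zero, coe_one, id, add_zero,
      add_zero, eq_comm] at h
  refine ⟨(k : 𝕜)⁻¹ • S, ?_⟩
  rw [hA, map_smul, map_sum, Finset.sum_congr rfl fun i _ => hAorbit i, Finset.sum_sub_distrib,
    hshift, Finset.sum_const, Finset.card_range, smul_sub, ← Nat.cast_smul_eq_nsmul 𝕜,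
    smul_smul, inv_mul_cancel₀ hk, one_smul, sub_add_cancel]

theorem mem_displacementSubgroup_of_isOfFinOrder {t : V ≃ᵢ V} (ht : IsOfFinOrder t)
    {A : V →ₗ[𝕜] V} (hA : ∀ x, t x = A x + t 0) {X : Submodule 𝕜 V}
    (hX : ∀ x, A x - x ∈ X) : t ∈ displacementSubgroup X.toAddSubgroup := by
  obtain ⟨p, hp⟩ := exists_apply_eq_of_isOfFinOrder ht hA
  have ht0 : t 0 = -(A p - p) := by
    rw [neg_sub, eq_sub_iff_add_eq', ← hA, hp]
  refine mem_displacementSubgroup.2 fun x => ?_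
  rw [hA, ht0, add_sub_right_comm]
  exact X.add_mem (hX x) (X.neg_mem (hX p))

end Torsion

end IsometryEquiv

open IsometryEquiv in
/-- If `Γ ≤ E(n)` is generated by torsion elements and `X` is the span of the
images of `A − I` over rotational parts `A` of elements of `Γ`, then every
element of `Γ` has translational part in `X`. -/
theorem stmt_11 {n : ℕ}
    (rot : (EuclideanSpace ℝ (Fin n) ≃ᵢ EuclideanSpace ℝ (Fin n)) →
      (EuclideanSpace ℝ (Fin n) ≃ₗᵢ[ℝ] EuclideanSpace ℝ (Fin n)))
    (hrot : ∀ (γ : EuclideanSpace ℝ (Fin n) ≃ᵢ EuclideanSpace ℝ (Fin n)) (x),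
      γ x = rot γ x + γ 0)
    (Γ : Subgroup (EuclideanSpace ℝ (Fin n) ≃ᵢ EuclideanSpace ℝ (Fin n)))
    (hgen : Γ = Subgroup.closure {t | t ∈ Γ ∧ IsOfFinOrder t}) :
    ∀ γ ∈ Γ, (γ : EuclideanSpace ℝ (Fin n) ≃ᵢ EuclideanSpace ℝ (Fin n)) 0 ∈
      Submodule.span ℝ (⋃ δ ∈ Γ,
        Set.range fun x : EuclideanSpace ℝ (Fin n) => rot δ x - x) := by
  set X := Submodule.span ℝ (⋃ δ ∈ Γ,
    Set.range fun x : EuclideanSpace ℝ (Fin n) => rot δ x - x)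
  have hΓ : Γ ≤ displacementSubgroup X.toAddSubgroup := by
    refine hgen.le.trans (Subgroup.closure_le _ |>.2 ?_)
    rintro t ⟨htΓ, ht⟩
    exact mem_displacementSubgroup_of_isOfFinOrder ht (A := (rot t).toLinearMap) (hrot t)
      fun x => Submodule.subset_span (Set.mem_biUnion htΓ ⟨x, rfl⟩)
  intro γ hγ
  simpa using mem_displacementSubgroup.1 (hΓ hγ) 0
end

section
/- In the (3,3,3)-triangle group Γ = ⟨a,b,c | a² = b² = c² = (ab)³ = (bc)³ = (ca)³ = 1⟩, every element is a product of at most four conjugates of the generators a, b, c (i.e., at most four reflections); in particular Γ is boundedly generated by torsion elements. -/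
/-- Relators of the (3,3,3)-triangle group
`⟨a,b,c | a² = b² = c² = (ab)³ = (bc)³ = (ca)³ = 1⟩`. -/
def rels333 : Set (FreeGroup (Fin 3)) :=
  {FreeGroup.of 0 ^ 2, FreeGroup.of 1 ^ 2, FreeGroup.of 2 ^ 2,
   (FreeGroup.of 0 * FreeGroup.of 1) ^ 3,
   (FreeGroup.of 1 * FreeGroup.of 2) ^ 3,
   (FreeGroup.of 2 * FreeGroup.of 0) ^ 3}


/-!
The group is the affine Weyl group of type Ã₂. Its translations `translation m n = t₁ ^ m * t₂ ^ n`
form a copy of ℤ² normalised by the vertex stabiliser `{1, a, b, ab, ba, aba}`, and every element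
is a translation times an element of that stabiliser. A product of two reflections in mirrors
meeting at a vertex is a rotation by ±120°: conjugating by translations moves `a * b` through all
`translation m n * (a * b)` with `m ≡ n (mod 3)`, and `c * a`, `b * c` cover the other two classes,
so every `translation m n * (a * b)`, and by inversion every `translation m n * (b * a)`, is a
product of two reflections. Each of the six cosets is such a rotation times at most two generators.
-/

section ProductsOfConjugates

variable {G ι : Type*} [Group G]

def IsProdOfConjugates (s : ι → G) (k : ℕ) (g : G) : Prop :=
  ∃ l : List G, l.length ≤ k ∧ (∀ x ∈ l, ∃ (i : ι) (t : G), x = t * s i * t⁻¹) ∧ l.prod = g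

variable {s : ι → G} {k k' : ℕ} {g g' : G}

lemma isProdOfConjugates_apply (i : ι) : IsProdOfConjugates s 1 (s i) :=
  ⟨[s i], le_rfl, by simpa using ⟨i, 1, by simp⟩, by simp⟩

lemma IsProdOfConjugates.mono (hg : IsProdOfConjugates s k g) (hk : k ≤ k') :
    IsProdOfConjugates s k' g :=
  let ⟨l, hl, hconj, hprod⟩ := hg
  ⟨l, hl.trans hk, hconj, hprod⟩

lemma IsProdOfConjugates.mul (hg : IsProdOfConjugates s k g)
    (hg' : IsProdOfConjugates s k' g') : IsProdOfConjugates s (k + k') (g * g') := by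
  obtain ⟨l, hl, hconj, rfl⟩ := hg
  obtain ⟨l', hl', hconj', rfl⟩ := hg'
  refine ⟨l ++ l', by simp only [List.length_append]; omega, ?_, List.prod_append⟩
  rintro x hx
  rcases List.mem_append.1 hx with hx | hx
  exacts [hconj x hx, hconj' x hx]

lemma IsProdOfConjugates.conj (hg : IsProdOfConjugates s k g) (h : G) :
    IsProdOfConjugates s k (h * g * h⁻¹) := by
  obtain ⟨l, hl, hconj, rfl⟩ := hg
  refine ⟨l.map (MulAut.conj h), by simpa using hl, ?_, (map_list_prod (MulAut.conj h) l).symm⟩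
  simp only [List.mem_map, MulAut.conj_apply]
  rintro _ ⟨x, hx, rfl⟩
  obtain ⟨i, t, rfl⟩ := hconj x hx
  exact ⟨i, h * t, by group⟩

lemma IsProdOfConjugates.inv (hs : ∀ i, (s i)⁻¹ = s i) (hg : IsProdOfConjugates s k g) :
    IsProdOfConjugates s k g⁻¹ := by
  obtain ⟨l, hl, hconj, rfl⟩ := hg
  refine ⟨(l.map (·⁻¹)).reverse, by simpa using hl, ?_, (List.prod_inv_reverse l).symm⟩
  simp only [List.mem_reverse, List.mem_map]
  rintro _ ⟨x, hx, rfl⟩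
  obtain ⟨i, t, rfl⟩ := hconj x hx
  exact ⟨i, t, by simp [hs, mul_assoc]⟩

lemma IsProdOfConjugates.exists_isOfFinOrder (hs : ∀ i, IsOfFinOrder (s i))
    (hg : IsProdOfConjugates s k g) :
    ∃ l : List G, (∀ x ∈ l, IsOfFinOrder x) ∧ l.length ≤ k ∧ l.prod = g := by
  obtain ⟨l, hl, hconj, hprod⟩ := hg
  refine ⟨l, fun x hx => ?_, hl, hprod⟩
  obtain ⟨i, t, rfl⟩ := hconj x hx
  exact (isConj_iff.2 ⟨t, rfl⟩).isOfFinOrder (hs i)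

lemma mul_mul_eq_of_mul_pow_three_eq_one {x y : G} (hx : x * x = 1) (hy : y * y = 1)
    (hxy : (x * y) ^ 3 = 1) : y * x * y = x * y * x := by
  have hx' : x⁻¹ = x := inv_eq_of_mul_eq_one_right hx
  have hy' : y⁻¹ = y := inv_eq_of_mul_eq_one_right hy
  have : x * y * x * (y * x * y) = 1 := by rw [← hxy, pow_succ, sq]; simp only [mul_assoc]
  rw [eq_inv_of_mul_eq_one_right this]
  simp [hx', hy', mul_assoc]

end ProductsOfConjugates

namespace Triangle333

local notation "Γ" => PresentedGroup rels333

open PresentedGroup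

def a : Γ := of 0
def b : Γ := of 1
def c : Γ := of 2

lemma of_mul_of_self (i : Fin 3) : (of i : Γ) * of i = 1 := by
  have hrel : FreeGroup.of i ^ 2 ∈ rels333 := by fin_cases i <;> simp [rels333]
  exact one_of_mem hrel

lemma of_inv (i : Fin 3) : (of i : Γ)⁻¹ = of i :=
  inv_eq_of_mul_eq_one_right (of_mul_of_self i)

lemma ab_pow_three : (a * b) ^ 3 = 1 := one_of_mem (by simp [rels333])
lemma bc_pow_three : (b * c) ^ 3 = 1 := one_of_mem (by simp [rels333])
lemma ca_pow_three : (c * a) ^ 3 = 1 := one_of_mem (by simp [rels333])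

@[simp] lemma a_mul_a : a * a = 1 := of_mul_of_self 0
@[simp] lemma b_mul_b : b * b = 1 := of_mul_of_self 1
@[simp] lemma c_mul_c : c * c = 1 := of_mul_of_self 2
@[simp] lemma a_inv : a⁻¹ = a := of_inv 0
@[simp] lemma b_inv : b⁻¹ = b := of_inv 1
@[simp] lemma c_inv : c⁻¹ = c := of_inv 2
@[simp] lemma a_mul_a_mul (x : Γ) : a * (a * x) = x := by rw [← mul_assoc, a_mul_a, one_mul]
@[simp] lemma b_mul_b_mul (x : Γ) : b * (b * x) = x := by rw [← mul_assoc, b_mul_b, one_mul]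

-- The braid relations, oriented so that `simp [mul_assoc]` normalises right-associated words
-- far enough to decide the identities used below (the rewriting system is not confluent).
lemma bab_eq_aba : b * a * b = a * b * a :=
  mul_mul_eq_of_mul_pow_three_eq_one a_mul_a b_mul_b ab_pow_three
lemma cbc_eq_bcb : c * b * c = b * c * b :=
  mul_mul_eq_of_mul_pow_three_eq_one b_mul_b c_mul_c bc_pow_three
lemma cac_eq_aca : c * a * c = a * c * a :=
  (mul_mul_eq_of_mul_pow_three_eq_one c_mul_c a_mul_a ca_pow_three).symm

@[simp] lemma b_mul_a_mul_b : b * (a * b) = a * (b * a) := by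
  simpa only [mul_assoc] using bab_eq_aba
@[simp] lemma c_mul_a_mul_c : c * (a * c) = a * (c * a) := by
  simpa only [mul_assoc] using cac_eq_aca
@[simp] lemma b_mul_a_mul_b_mul (x : Γ) : b * (a * (b * x)) = a * (b * (a * x)) := by
  simp only [← mul_assoc, bab_eq_aba]
@[simp] lemma c_mul_b_mul_c_mul (x : Γ) : c * (b * (c * x)) = b * (c * (b * x)) := by
  simp only [← mul_assoc, cbc_eq_bcb]
@[simp] lemma c_mul_a_mul_c_mul (x : Γ) : c * (a * (c * x)) = a * (c * (a * x)) := by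
  simp only [← mul_assoc, cac_eq_aca]

-- `a * b * a` is the reflection in the mirror through the vertex `a ∩ b` parallel to that of `c`,
-- so `t₁` is a translation; `t₂` is its image under `b`.
def t₁ : Γ := c * (a * (b * a))
def t₂ : Γ := b * t₁ * b

lemma commute_t₁_t₂ : Commute t₁ t₂ :=
  mul_inv_eq_iff_eq_mul.1 (by simp [t₁, t₂, mul_assoc] : t₁ * t₂ * t₁⁻¹ = t₂)

def translation (m n : ℤ) : Γ := t₁ ^ m * t₂ ^ n

lemma translation_mul_translation (m n p q : ℤ) :
    translation m n * translation p q = translation (m + p) (n + q) := by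
  rw [translation, translation, translation, zpow_add, zpow_add,
    (commute_t₁_t₂.zpow_zpow p n).symm.mul_mul_mul_comm]

lemma translation_zpow (m n k : ℤ) : translation m n ^ k = translation (m * k) (n * k) := by
  rw [translation, (commute_t₁_t₂.zpow_zpow m n).mul_zpow, ← zpow_mul, ← zpow_mul,
    translation]

lemma translation_inv (m n : ℤ) : (translation m n)⁻¹ = translation (-m) (-n) := by
  rw [← zpow_neg_one, translation_zpow, mul_neg_one, mul_neg_one]

lemma conj_translation {u : Γ} {p q r s : ℤ} (h₁ : u * t₁ * u⁻¹ = translation p q)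
    (h₂ : u * t₂ * u⁻¹ = translation r s) (m n : ℤ) :
    u * translation m n * u⁻¹ = translation (p * m + r * n) (q * m + s * n) := by
  calc u * translation m n * u⁻¹ = (u * t₁ * u⁻¹) ^ m * (u * t₂ * u⁻¹) ^ n := by
        simp only [translation, conj_zpow]; group
    _ = translation (p * m + r * n) (q * m + s * n) := by
        rw [h₁, h₂, translation_zpow, translation_zpow, translation_mul_translation,
          mul_comm p, mul_comm q, mul_comm r, mul_comm s]

lemma a_mul_translation (m n : ℤ) : a * translation m n = translation m (-(m + n)) * a := by
  rw [← mul_inv_eq_iff_eq_mul, conj_translation (p := 1) (q := -1) (r := 0) (s := -1)]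
  · congr 1 <;> ring
  all_goals simp [translation, t₁, t₂, mul_assoc]

lemma b_mul_translation (m n : ℤ) : b * translation m n = translation n m * b := by
  rw [← mul_inv_eq_iff_eq_mul, conj_translation (p := 0) (q := 1) (r := 1) (s := 0)]
  · congr 1 <;> ring
  all_goals simp [translation, t₁, t₂, mul_assoc]

lemma ab_mul_translation (m n : ℤ) :
    a * b * translation m n = translation n (-(m + n)) * (a * b) := by
  rw [mul_assoc, b_mul_translation, ← mul_assoc, a_mul_translation, mul_assoc, add_comm]

lemma ba_mul_translation (m n : ℤ) :
    b * a * translation m n = translation (-(m + n)) m * (b * a) := by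
  rw [mul_assoc, a_mul_translation, ← mul_assoc, b_mul_translation, mul_assoc]

lemma c_eq_translation_mul : c = translation 1 0 * (a * (b * a)) := by
  simp [translation, t₁, mul_assoc]

def vertexStabilizer : Set Γ := {1, a, b, a * b, b * a, a * (b * a)}

lemma mul_a_mem_vertexStabilizer {d : Γ} (hd : d ∈ vertexStabilizer) :
    d * a ∈ vertexStabilizer := by
  rcases hd with rfl | rfl | rfl | rfl | rfl | rfl <;> simp [vertexStabilizer, mul_assoc]

lemma mul_b_mem_vertexStabilizer {d : Γ} (hd : d ∈ vertexStabilizer) :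
    d * b ∈ vertexStabilizer := by
  rcases hd with rfl | rfl | rfl | rfl | rfl | rfl <;> simp [vertexStabilizer, mul_assoc]

lemma exists_mul_translation_eq {d : Γ} (hd : d ∈ vertexStabilizer) (m n : ℤ) :
    ∃ m' n', d * translation m n = translation m' n' * d := by
  let P (x : Γ) : Prop := ∀ m n : ℤ, ∃ m' n', x * translation m n = translation m' n' * x
  have hmul {x y : Γ} (hx : P x) (hy : P y) : P (x * y) := by
    intro m n
    obtain ⟨m₁, n₁, hy⟩ := hy m n
    obtain ⟨m₂, n₂, hx⟩ := hx m₁ n₁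
    exact ⟨m₂, n₂, by rw [mul_assoc, hy, ← mul_assoc, hx, mul_assoc]⟩
  have h1 : P 1 := fun m n => ⟨m, n, by simp⟩
  have ha : P a := fun m n => ⟨_, _, a_mul_translation m n⟩
  have hb : P b := fun m n => ⟨_, _, b_mul_translation m n⟩
  rcases hd with rfl | rfl | rfl | rfl | rfl | rfl
  exacts [h1 m n, ha m n, hb m n, hmul ha hb m n, hmul hb ha m n, hmul ha (hmul hb ha) m n]

lemma exists_eq_translation_mul (g : Γ) :
    ∃ m n : ℤ, ∃ d ∈ vertexStabilizer, g = translation m n * d := by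
  have step (x : Γ) (i : Fin 3)
      (hx : ∃ m n : ℤ, ∃ d ∈ vertexStabilizer, x = translation m n * d) :
      ∃ m n : ℤ, ∃ d ∈ vertexStabilizer, x * of i = translation m n * d := by
    obtain ⟨m, n, d, hd, rfl⟩ := hx
    fin_cases i
    · exact ⟨m, n, d * a, mul_a_mem_vertexStabilizer hd, mul_assoc _ _ _⟩
    · exact ⟨m, n, d * b, mul_b_mem_vertexStabilizer hd, mul_assoc _ _ _⟩
    · obtain ⟨m', n', hd'⟩ := exists_mul_translation_eq hd 1 0
      refine ⟨m + m', n + n', d * a * b * a, mul_a_mem_vertexStabilizer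
        (mul_b_mem_vertexStabilizer (mul_a_mem_vertexStabilizer hd)), ?_⟩
      change translation m n * d * c = _
      rw [c_eq_translation_mul, ← mul_assoc, mul_assoc _ d, hd', ← translation_mul_translation]
      simp only [mul_assoc]
  have hg : g ∈ Subgroup.closure (Set.range (of : Fin 3 → Γ)) := by simp
  induction hg using Subgroup.closure_induction_right with
  | one => exact ⟨0, 0, 1, by simp [vertexStabilizer], by simp [translation]⟩
  | mul_right x _ _ hy hx =>
    obtain ⟨i, rfl⟩ := hy
    exact step x i hx
  | mul_inv_cancel x _ _ hy hx =>
    obtain ⟨i, rfl⟩ := hy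
    rw [of_inv]
    exact step x i hx

lemma conj_translation_mul_ab (p q s u : ℤ) :
    translation s u * (translation p q * (a * b)) * (translation s u)⁻¹ =
      translation (p + s - u) (q + s + 2 * u) * (a * b) := by
  calc translation s u * (translation p q * (a * b)) * (translation s u)⁻¹
      = translation s u * translation p q * (a * b * translation (-s) (-u)) := by
        rw [translation_inv]; simp only [mul_assoc]
    _ = translation (s + p + -u) (u + q + -(-s + -u)) * (a * b) := by
        rw [ab_mul_translation, ← mul_assoc, translation_mul_translation,
          translation_mul_translation]
    _ = translation (p + s - u) (q + s + 2 * u) * (a * b) := by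
        congr 2 <;> ring

lemma isProdOfConjugates_translation_mul_ab (m n : ℤ) :
    IsProdOfConjugates of 2 (translation m n * (a * b)) := by
  have base : ∃ p q : ℤ, (m - n - (p - q)) % 3 = 0 ∧
      IsProdOfConjugates of 2 (translation p q * (a * b)) := by
    have hpair (i j : Fin 3) : IsProdOfConjugates of 2 ((of i : Γ) * of j) :=
      (isProdOfConjugates_apply i).mul (isProdOfConjugates_apply j)
    rcases (by omega : (m - n) % 3 = 0 ∨ (m - n) % 3 = 1 ∨ (m - n) % 3 = 2) with h | h | h
    · refine ⟨0, 0, by omega, ?_⟩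
      rw [show translation 0 0 * (a * b) = a * b by simp [translation]]
      exact hpair 0 1
    · refine ⟨1, 0, by omega, ?_⟩
      rw [show translation 1 0 * (a * b) = c * a by simp [translation, t₁, mul_assoc]]
      exact hpair 2 0
    · refine ⟨0, 1, by omega, ?_⟩
      rw [show translation 0 1 * (a * b) = b * c by simp [translation, t₁, t₂, mul_assoc]]
      exact hpair 1 2
  obtain ⟨p, q, hpq, hbase⟩ := base
  -- `translation s u` shifts `(p, q)` by `(s - u, s + 2 * u)`, which runs through all pairs whose
  -- difference is divisible by 3.
  have := hbase.conj (translation (m - p + (n - q - m + p) / 3) ((n - q - m + p) / 3))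
  rw [conj_translation_mul_ab] at this
  convert this using 3 <;> omega

lemma isProdOfConjugates_translation_mul_ba (m n : ℤ) :
    IsProdOfConjugates of 2 (translation m n * (b * a)) := by
  convert (isProdOfConjugates_translation_mul_ab (-n) (m + n)).inv of_inv using 1
  rw [mul_inv_rev, translation_inv, mul_inv_rev, a_inv, b_inv, ba_mul_translation]
  congr 2 <;> ring

lemma isProdOfConjugates_four (g : Γ) : IsProdOfConjugates of 4 g := by
  obtain ⟨m, n, d, hd, rfl⟩ := exists_eq_translation_mul g
  have hab := isProdOfConjugates_translation_mul_ab m n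
  have hba := isProdOfConjugates_translation_mul_ba m n
  have ha : IsProdOfConjugates of 1 a := isProdOfConjugates_apply 0
  have hb : IsProdOfConjugates of 1 b := isProdOfConjugates_apply 1
  rcases hd with rfl | rfl | rfl | rfl | rfl | rfl
  · simpa [mul_assoc] using (hab.mul hb).mul ha
  · simpa [mul_assoc] using (hab.mul hb).mono (by norm_num : 2 + 1 ≤ 4)
  · simpa [mul_assoc] using (hba.mul ha).mono (by norm_num : 2 + 1 ≤ 4)
  · exact hab.mono (by norm_num)
  · exact hba.mono (by norm_num)
  · simpa [mul_assoc] using (hab.mul ha).mono (by norm_num : 2 + 1 ≤ 4)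

lemma isOfFinOrder_of (i : Fin 3) : IsOfFinOrder (of i : Γ) :=
  isOfFinOrder_iff_pow_eq_one.2 ⟨2, two_pos, by rw [sq, of_mul_of_self]⟩

end Triangle333

theorem stmt_15 :
    (∀ g : PresentedGroup rels333, ∃ l : List (PresentedGroup rels333),
      l.length ≤ 4 ∧
      (∀ x ∈ l, ∃ (i : Fin 3) (t : PresentedGroup rels333),
        x = t * PresentedGroup.of i * t⁻¹) ∧
      l.prod = g) ∧
    ∃ M : ℕ, ∀ g : PresentedGroup rels333, ∃ l : List (PresentedGroup rels333),
      (∀ x ∈ l, IsOfFinOrder x) ∧ l.length ≤ M ∧ l.prod = g :=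
  ⟨Triangle333.isProdOfConjugates_four, 4, fun g =>
    (Triangle333.isProdOfConjugates_four g).exists_isOfFinOrder Triangle333.isOfFinOrder_of⟩
end

section
/- Consider the linear program: minimize 1 − x_p − y_q subject to x_1 + p·x_p = 1, y_1 + q·y_q = 1, x_1 + x_p + y_1 + y_q ≥ 1, and x_1, x_p, y_1, y_q ≥ 0, where 2 ≤ p ≤ q are integers. Then the minimum value equals 1 − q/(p(q−1)), achieved at x_1 = 0, x_p = 1/p, y_1 = (pq−p−q)/(p(q−1)), y_q = 1/(p(q−1)). -/
/-!
Eliminating `x₁ = 1 - p x_p` and `y₁ = 1 - q y_q`, the program asks to maximise `x_p + y_q`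
subject to `(p - 1) x_p + (q - 1) y_q ≤ 1` and `p x_p ≤ 1`. Since `p ≤ q`, mass on `x_p` is
cheaper, so the optimum saturates `x_p = 1/p` and spends the remaining budget `1/p` on `y_q`.
The dual certificate is the identity
`p (q - 1) (x_p + y_q) = p ((p - 1) x_p + (q - 1) y_q) + (q - p) (p x_p)`.
-/

theorem mul_add_le_of_lp_feasible {p q x1 xp y1 yq : ℝ} (hp : 0 ≤ p) (hpq : p ≤ q)
    (hx1 : 0 ≤ x1) (hx : x1 + p * xp = 1) (hy : y1 + q * yq = 1)
    (hsum : 1 ≤ x1 + xp + y1 + yq) :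
    p * (q - 1) * (xp + yq) ≤ q := by
  have hbudget : (p - 1) * xp + (q - 1) * yq ≤ 1 := by linarith
  have hxp : p * xp ≤ 1 := by linarith
  calc p * (q - 1) * (xp + yq) = p * ((p - 1) * xp + (q - 1) * yq) + (q - p) * (p * xp) := by
        ring
    _ ≤ p * 1 + (q - p) * 1 := by gcongr
    _ = q := by ring

theorem lp_optimal_point_spec (p q : ℝ) (hp : 2 ≤ p) (hpq : p ≤ q) :
    (0 : ℝ) ≤ (0 : ℝ) ∧ 0 ≤ (1 : ℝ) / p ∧
      0 ≤ (p * q - p - q) / (p * (q - 1)) ∧ 0 ≤ (1 : ℝ) / (p * (q - 1)) ∧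
      (0 : ℝ) + p * (1 / p) = 1 ∧
      (p * q - p - q) / (p * (q - 1)) + q * (1 / (p * (q - 1))) = 1 ∧
      1 ≤ (0 : ℝ) + 1 / p + (p * q - p - q) / (p * (q - 1)) + 1 / (p * (q - 1)) ∧
      1 - q / (p * (q - 1)) = 1 - (1 : ℝ) / p - 1 / (p * (q - 1)) := by
  have hp0 : 0 < p := by linarith
  have hq1 : 0 < q - 1 := by linarith
  have hd : 0 < p * (q - 1) := mul_pos hp0 hq1
  have hnum : 0 ≤ p * q - p - q := by nlinarith
  have hsum : (0 : ℝ) + 1 / p + (p * q - p - q) / (p * (q - 1)) + 1 / (p * (q - 1)) = 1 := by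
    field_simp; ring
  refine ⟨le_rfl, by positivity, div_nonneg hnum hd.le, by positivity, ?_, ?_, hsum.ge, ?_⟩
  all_goals field_simp [hp0.ne', hq1.ne']
  all_goals ring

/-- The linear program computing `stl(ab)` in `ℤ/p * ℤ/q`:
minimize `1 − x_p − y_q` subject to `x₁ + p x_p = 1`, `y₁ + q y_q = 1`,
`x₁ + x_p + y₁ + y_q ≥ 1` and nonnegativity. The minimum is
`1 − q/(p(q−1))`, achieved at `x₁ = 0`, `x_p = 1/p`,
`y₁ = (pq−p−q)/(p(q−1))`, `y_q = 1/(p(q−1))`. -/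
theorem stmt_17 (p q : ℕ) (hp : 2 ≤ p) (hpq : p ≤ q) :
    IsLeast {v : ℝ | ∃ x1 xp y1 yq : ℝ,
        0 ≤ x1 ∧ 0 ≤ xp ∧ 0 ≤ y1 ∧ 0 ≤ yq ∧
        x1 + p * xp = 1 ∧ y1 + q * yq = 1 ∧
        1 ≤ x1 + xp + y1 + yq ∧
        v = 1 - xp - yq}
      (1 - q / (p * (q - 1))) ∧
    ((0 : ℝ) ≤ (0 : ℝ) ∧ 0 ≤ (1 : ℝ) / p ∧
      0 ≤ ((p * q - p - q : ℝ)) / (p * (q - 1)) ∧ 0 ≤ (1 : ℝ) / (p * (q - 1)) ∧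
      (0 : ℝ) + p * (1 / p) = 1 ∧
      (p * q - p - q : ℝ) / (p * (q - 1)) + q * (1 / (p * (q - 1))) = 1 ∧
      1 ≤ (0 : ℝ) + 1 / p + (p * q - p - q) / (p * (q - 1)) + 1 / (p * (q - 1)) ∧
      1 - q / (p * (q - 1)) = 1 - (1 : ℝ) / p - 1 / (p * (q - 1))) := by
  have hP : (2 : ℝ) ≤ p := by exact_mod_cast hp
  have hPQ : (p : ℝ) ≤ q := by exact_mod_cast hpq
  have hopt := lp_optimal_point_spec p q hP hPQ
  refine ⟨⟨?_, ?_⟩, hopt⟩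
  · obtain ⟨h0, hxp, hy1, hyq, hx, hy, hsum, hval⟩ := hopt
    exact ⟨_, _, _, _, h0, hxp, hy1, hyq, hx, hy, hsum, hval⟩
  rintro v ⟨x1, xp, y1, yq, hx1, -, -, -, hx, hy, hsum, rfl⟩
  have hd : (0 : ℝ) < p * (q - 1) := mul_pos (by linarith) (by linarith)
  have hbound : xp + yq ≤ q / (p * (q - 1)) := by
    rw [le_div_iff₀ hd, mul_comm]
    exact mul_add_le_of_lp_feasible (by linarith) hPQ hx1 hx hy hsum
  linarith
end

section
/- Consider the linear program: minimize 1 − 2x_p − 2y_q subject to x_1 + p·x_p + Σ_{k=1}^p (k−1)z_k = Σ_{k=1}^q w_k, y_1 + q·y_q + Σ_{k=1}^q (k−1)w_k = Σ_{k=1}^p z_k, Σ_{k=1}^q w_k + Σ_{k=1}^p z_k = 1, x_1 + x_p + y_1 + y_q ≥ 1/2, with all variables nonnegative, where p, q ≥ 2 are integers. Then the minimum value equals 1 − 1/(min(p,q) − 1). -/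
/-!
Adding the first two constraints and using the third gives
`x₁ + p x_p + y₁ + q y_q ≤ 1`, since the weights `k - 1` are nonnegative; subtracting the
fourth constraint leaves `(p - 1) x_p + (q - 1) y_q ≤ 1/2`, hence
`2 x_p + 2 y_q ≤ 1 / (min(p,q) - 1)`. The bound is attained, for `p ≤ q`, with all the mass of
`z` and `w` on `k = 1`: `x_p = t`, `y₁ = z₁ = (p - 2) t`, `w₁ = p t`, where `t = 1/(2(p - 1))`.
The program is symmetric under `(p, x, z) ↔ (q, y, w)`, which reduces everything to `p ≤ q`.
-/

open Finset

def feasibleValues (p q : ℕ) : Set ℝ :=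
  {v : ℝ | ∃ (x1 xp y1 yq : ℝ) (z w : ℕ → ℝ),
    0 ≤ x1 ∧ 0 ≤ xp ∧ 0 ≤ y1 ∧ 0 ≤ yq ∧
    (∀ k, 0 ≤ z k) ∧ (∀ k, 0 ≤ w k) ∧
    x1 + p * xp + (∑ k ∈ Icc 1 p, ((k : ℝ) - 1) * z k) = (∑ k ∈ Icc 1 q, w k) ∧
    y1 + q * yq + (∑ k ∈ Icc 1 q, ((k : ℝ) - 1) * w k) = (∑ k ∈ Icc 1 p, z k) ∧
    (∑ k ∈ Icc 1 q, w k) + (∑ k ∈ Icc 1 p, z k) = 1 ∧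
    1 / 2 ≤ x1 + xp + y1 + yq ∧
    v = 1 - 2 * xp - 2 * yq}

lemma feasibleValues_subset_swap (p q : ℕ) : feasibleValues p q ⊆ feasibleValues q p := by
  rintro v ⟨x1, xp, y1, yq, z, w, hx1, hxp, hy1, hyq, hz, hw, hx, hy, hmass, hhalf, hv⟩
  exact ⟨y1, yq, x1, xp, w, z, hy1, hyq, hx1, hxp, hw, hz, hy, hx, by rw [add_comm, hmass],
    by linarith, by linarith⟩

lemma feasibleValues_comm (p q : ℕ) : feasibleValues p q = feasibleValues q p :=
  (feasibleValues_subset_swap p q).antisymm (feasibleValues_subset_swap q p)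

lemma sum_Icc_sub_one_mul_nonneg (n : ℕ) {f : ℕ → ℝ} (hf : ∀ k, 0 ≤ f k) :
    0 ≤ ∑ k ∈ Icc 1 n, ((k : ℝ) - 1) * f k :=
  sum_nonneg fun k hk =>
    mul_nonneg (sub_nonneg.mpr (by exact_mod_cast (mem_Icc.mp hk).1)) (hf k)

lemma le_of_mem_feasibleValues {p q : ℕ} {m v : ℝ} (hm : 1 < m) (hmp : m ≤ p) (hmq : m ≤ q)
    (hv : v ∈ feasibleValues p q) : 1 - 1 / (m - 1) ≤ v := by
  obtain ⟨x1, xp, y1, yq, z, w, hx1, hxp, hy1, hyq, hz, hw, hx, hy, hmass, hhalf, rfl⟩ := hv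
  have hz' := sum_Icc_sub_one_mul_nonneg p hz
  have hw' := sum_Icc_sub_one_mul_nonneg q hw
  have hweighted : (p - 1) * xp + (q - 1) * yq ≤ (1 / 2 : ℝ) := by linarith
  have hm_weighted : (m - 1) * (2 * xp + 2 * yq) ≤ 1 := by nlinarith
  have hobjective : 2 * xp + 2 * yq ≤ 1 / (m - 1) := by
    rwa [le_div_iff₀ (sub_pos.mpr hm), mul_comm]
  linarith

lemma sum_Icc_one_pi_single {M : Type*} [AddCommMonoid M] {n : ℕ} (hn : 1 ≤ n) (c : M) :
    ∑ k ∈ Icc 1 n, (Pi.single 1 c : ℕ → M) k = c := by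
  simp [sum_pi_single', hn]

lemma sum_Icc_sub_one_mul_pi_single (n : ℕ) (c : ℝ) :
    ∑ k ∈ Icc 1 n, ((k : ℝ) - 1) * (Pi.single 1 c : ℕ → ℝ) k = 0 :=
  sum_eq_zero fun k _ => by
    rcases eq_or_ne k 1 with rfl | hk
    · simp
    · simp [hk]

lemma mem_feasibleValues_of_le {p q : ℕ} (hp : 2 ≤ p) (hpq : p ≤ q) :
    1 - 1 / ((p : ℝ) - 1) ∈ feasibleValues p q := by
  have hp' : (2 : ℝ) ≤ p := by exact_mod_cast hp
  have hp1 : (0 : ℝ) < p - 1 := by linarith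
  set t : ℝ := 1 / (2 * (p - 1)) with ht
  have ht_pos : 0 < t := by positivity
  have hpt : 2 * (p - 1) * t = 1 := by rw [ht]; field_simp
  have hy1 : 0 ≤ (p - 2) * t := mul_nonneg (by linarith) ht_pos.le
  have hz : (0 : ℕ → ℝ) ≤ Pi.single 1 ((p - 2) * t) := Pi.single_nonneg.mpr hy1
  have hw : (0 : ℕ → ℝ) ≤ Pi.single 1 ((p : ℝ) * t) := Pi.single_nonneg.mpr (by positivity)
  refine ⟨0, t, (p - 2) * t, 0, Pi.single 1 ((p - 2) * t), Pi.single 1 ((p : ℝ) * t),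
    le_rfl, ht_pos.le, hy1, le_rfl, hz, hw, ?_, ?_, ?_, by linarith, ?_⟩
  iterate 3
    simp only [sum_Icc_sub_one_mul_pi_single, sum_Icc_one_pi_single (by omega : 1 ≤ p),
      sum_Icc_one_pi_single (by omega : 1 ≤ q)]
    linarith
  rw [ht]
  field_simp
  ring

open Finset in
/-- The linear program computing `stl([a,b])` in `ℤ/p * ℤ/q`: its minimum value
is `1 − 1/(min(p,q) − 1)`. -/
theorem stmt_18 (p q : ℕ) (hp : 2 ≤ p) (hq : 2 ≤ q) :
    IsLeast {v : ℝ | ∃ (x1 xp y1 yq : ℝ) (z w : ℕ → ℝ),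
        0 ≤ x1 ∧ 0 ≤ xp ∧ 0 ≤ y1 ∧ 0 ≤ yq ∧
        (∀ k, 0 ≤ z k) ∧ (∀ k, 0 ≤ w k) ∧
        x1 + p * xp + (∑ k ∈ Icc 1 p, ((k : ℝ) - 1) * z k) = (∑ k ∈ Icc 1 q, w k) ∧
        y1 + q * yq + (∑ k ∈ Icc 1 q, ((k : ℝ) - 1) * w k) = (∑ k ∈ Icc 1 p, z k) ∧
        (∑ k ∈ Icc 1 q, w k) + (∑ k ∈ Icc 1 p, z k) = 1 ∧
        1 / 2 ≤ x1 + xp + y1 + yq ∧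
        v = 1 - 2 * xp - 2 * yq}
      (1 - 1 / ((min p q : ℝ) - 1)) := by
  change IsLeast (feasibleValues p q) _
  wlog hpq : p ≤ q generalizing p q
  · rw [feasibleValues_comm, min_comm]
    exact this q p hq hp (by omega)
  have hmin : (min p q : ℝ) = p := min_eq_left (by exact_mod_cast hpq)
  refine ⟨by rw [hmin]; exact mem_feasibleValues_of_le hp hpq, fun v hv => ?_⟩
  have hp' : (2 : ℝ) ≤ p := by exact_mod_cast hp
  exact le_of_mem_feasibleValues (by rw [hmin]; linarith) (min_le_left _ _) (min_le_right _ _) hv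
end
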